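/- For any symmetric probability measure x on ℝ̄, the entropy functional H(x) = ∫ log₂(1 + e^{-α}) x(dα) admits the series expansion H(x) = 1 − Σ_{k=1}^∞ γ_k M_k(x), where γ_k = 1/((log 2)·2k·(2k−1)) and M_k(x) = ∫ tanh^{2k}(α/2) x(dα). -/

import Mathlib

open MeasureTheory Real Set Filter
open scoped ENNReal NNReal

noncomputable section

/-- Exponential on the extended reals, valued in `ℝ≥0∞` (with `e^{-∞}=0`, `e^{∞}=∞`). -/
def eexp (a : EReal) : ℝ≥0∞ :=
  if a = ⊤ then ⊤ else if a = ⊥ then 0 else ENNReal.ofReal (Real.exp a.toReal)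

/-- A finite Borel measure `x` on the extended reals is *symmetric* if
`x(-E) = ∫_E e^{-α} x(dα)` for every Borel set `E`. -/
def SymmetricM (x : Measure EReal) : Prop :=
  ∀ E : Set EReal, MeasurableSet E →
    x ((fun a : EReal => -a) ⁻¹' E) = ∫⁻ a in E, eexp (-a) ∂x

/-- `tanh(α/2)` extended continuously to the extended reals. -/
def etanh (a : EReal) : ℝ :=
  if a = ⊤ then 1 else if a = ⊥ then -1 else Real.tanh (a.toReal / 2)

/-- The moment functional `M_k(x) = ∫ tanh^{2k}(α/2) x(dα)`. -/
def Mk (k : ℕ) (x : Measure EReal) : ℝ := ∫ a, (etanh a) ^ (2 * k) ∂x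

/-- The entropy integrand `log₂(1+e^{-α})`, with the convention that it vanishes at `±∞`
(symmetric measures put no mass at `-∞`). -/
def entFn (a : EReal) : ℝ :=
  if a = ⊤ then 0 else if a = ⊥ then 0 else Real.logb 2 (1 + Real.exp (-a.toReal))

/-- The entropy functional `H(x) = ∫ log₂(1+e^{-α}) x(dα)`. -/
def Hent (x : Measure EReal) : ℝ := ∫ a, entFn a ∂x

/-- Variable-node convolution `⊛`: pushforward of the product measure under addition. -/
def vconv (x y : Measure EReal) : Measure EReal :=
  Measure.map (fun p : EReal × EReal => p.1 + p.2) (x.prod y)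

/-- Inverse hyperbolic tangent on `ℝ`. -/
def artanh (t : ℝ) : ℝ := Real.log ((1 + t) / (1 - t)) / 2

/-- The check-node combination map `(α₁,α₂) ↦ 2 tanh⁻¹(tanh(α₁/2) tanh(α₂/2))` on `ℝ̄ × ℝ̄`. -/
def boxFn (p : EReal × EReal) : EReal :=
  if etanh p.1 * etanh p.2 = 1 then ⊤
  else if etanh p.1 * etanh p.2 = -1 then ⊥
  else ((2 * _root_.artanh (etanh p.1 * etanh p.2) : ℝ) : EReal)

/-- Check-node convolution `⊞`: pushforward of the product measure under `boxFn`. -/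
def cconv (x y : Measure EReal) : Measure EReal :=
  Measure.map boxFn (x.prod y)

/-- Degradation order: `Degraded x' x` means `x' ⪰ x`, i.e.
`∫ f(|tanh(α/2)|) dx' ≥ ∫ f(|tanh(α/2)|) dx` for all concave non-increasing `f : [0,1] → ℝ`. -/
def Degraded (x' x : Measure EReal) : Prop :=
  ∀ f : ℝ → ℝ, ConcaveOn ℝ (Set.Icc (0:ℝ) 1) f → AntitoneOn f (Set.Icc (0:ℝ) 1) →
    ∫ a, f |etanh a| ∂x ≤ ∫ a, f |etanh a| ∂x'

/-- The coefficients `γ_k = 1/((log 2)·2k·(2k−1))`. -/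
def gam (k : ℕ) : ℝ := 1 / (Real.log 2 * (2 * (k : ℝ)) * (2 * (k : ℝ) - 1))

/-- The entropy distance `d_H(x₁,x₂) = Σ_{k≥1} γ_k |M_k(x₁) − M_k(x₂)|`. -/
def dH (x y : Measure EReal) : ℝ := ∑' k : ℕ, gam (k + 1) * |Mk (k + 1) x - Mk (k + 1) y|

/-- The Bhattacharyya integrand `e^{-α/2}` (vanishing at `±∞`, as symmetric measures put
no mass at `-∞`). -/
def bFn (a : EReal) : ℝ :=
  if a = ⊤ then 0 else if a = ⊥ then 0 else Real.exp (-(a.toReal) / 2)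

/-- The Bhattacharyya functional `B(x) = ∫ e^{-α/2} x(dα)`. -/
def Bhat (x : Measure EReal) : ℝ := ∫ a, bFn a ∂x

/-- `n`-fold variable-node convolution power `x^{⊛n}` (with `x^{⊛0} = Δ_0`). -/
def vpow (x : Measure EReal) : ℕ → Measure EReal
  | 0 => Measure.dirac 0
  | n + 1 => vconv (vpow x n) x


open scoped Topology

namespace S5

/-- density weight -/
def W (a : EReal) : ℝ := (eexp (-a)).toReal

lemma measurable_eexp : Measurable eexp := by
  unfold eexp
  refine Measurable.ite (measurableSet_eq) measurable_const ?_
  refine Measurable.ite (measurableSet_eq) measurable_const ?_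
  exact ENNReal.measurable_ofReal.comp (Real.measurable_exp.comp measurable_ereal_toReal)

lemma measurable_etanh : Measurable etanh := by
  unfold etanh
  refine Measurable.ite (measurableSet_eq) measurable_const ?_
  refine Measurable.ite (measurableSet_eq) measurable_const ?_
  have ht : Continuous Real.tanh := by
    have : Real.tanh = fun y => Real.sinh y / Real.cosh y := funext Real.tanh_eq_sinh_div_cosh
    rw [this]
    exact Real.continuous_sinh.div Real.continuous_cosh fun y => (Real.cosh_pos y).ne'
  exact ht.measurable.comp (measurable_ereal_toReal.div_const 2)

lemma measurable_entFn : Measurable entFn := by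
  unfold entFn
  refine Measurable.ite (measurableSet_eq) measurable_const ?_
  refine Measurable.ite (measurableSet_eq) measurable_const ?_
  have : Measurable fun a : EReal => 1 + Real.exp (-a.toReal) :=
    measurable_const.add (Real.measurable_exp.comp measurable_ereal_toReal.neg)
  exact (Real.measurable_log.comp this).div_const _

lemma measurable_W : Measurable W :=
  ENNReal.measurable_toReal.comp (measurable_eexp.comp measurable_neg)

lemma W_nonneg (a : EReal) : 0 ≤ W a := ENNReal.toReal_nonneg

lemma eexp_coe (r : ℝ) : eexp (r : EReal) = ENNReal.ofReal (Real.exp r) := by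
  simp [eexp, EReal.coe_ne_top, EReal.coe_ne_bot]

lemma W_coe (r : ℝ) : W ((r : ℝ) : EReal) = Real.exp (-r) := by
  rw [W, show -((r : ℝ) : EReal) = ((-r : ℝ) : EReal) by push_cast; ring, eexp_coe,
    ENNReal.toReal_ofReal (Real.exp_pos _).le]

lemma W_top : W ⊤ = 0 := by simp [W, eexp]

lemma etanh_coe (r : ℝ) : etanh (r : EReal) = Real.tanh (r / 2) := by
  simp [etanh, EReal.coe_ne_top, EReal.coe_ne_bot]

lemma etanh_neg (a : EReal) : etanh (-a) = -etanh a := by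
  induction a using EReal.rec with
  | bot => simp [etanh]
  | top => simp [etanh]
  | coe r =>
    rw [show -((r : ℝ) : EReal) = ((-r : ℝ) : EReal) by push_cast; ring, etanh_coe, etanh_coe,
      neg_div, Real.tanh_neg]

lemma tanh_expr (y : ℝ) :
    Real.tanh y = (Real.exp y - Real.exp (-y)) / (Real.exp y + Real.exp (-y)) := by
  have h : 0 < Real.exp y + Real.exp (-y) := by positivity
  rw [Real.tanh_eq_sinh_div_cosh, Real.sinh_eq, Real.cosh_eq]
  field_simp

lemma abs_tanh_lt_one (y : ℝ) : |Real.tanh y| < 1 := by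
  have h1 : 0 < Real.exp y := Real.exp_pos _
  have h2 : 0 < Real.exp (-y) := Real.exp_pos _
  rw [tanh_expr, abs_div, abs_of_pos (show (0:ℝ) < Real.exp y + Real.exp (-y) by positivity),
    div_lt_one (by positivity)]
  rcases abs_cases (Real.exp y - Real.exp (-y)) with ⟨h, _⟩ | ⟨h, _⟩ <;> rw [h] <;> linarith

lemma etanh_le_one (a : EReal) : etanh a ≤ 1 := by
  induction a using EReal.rec with
  | bot => norm_num [etanh]
  | top => norm_num [etanh]
  | coe r => rw [etanh_coe]; exact le_of_lt (abs_lt.mp (abs_tanh_lt_one _)).2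

lemma neg_one_lt_etanh {a : EReal} (ha : a ≠ ⊥) : -1 < etanh a := by
  induction a using EReal.rec with
  | bot => exact absurd rfl ha
  | top => norm_num [etanh]
  | coe r => rw [etanh_coe]; exact (abs_lt.mp (abs_tanh_lt_one _)).1

lemma abs_etanh_le_one (a : EReal) : |etanh a| ≤ 1 := by
  induction a using EReal.rec with
  | bot => norm_num [etanh]
  | top => norm_num [etanh]
  | coe r => rw [etanh_coe]; exact (abs_tanh_lt_one _).le

/-- key real identity -/
lemma tanh_weight (r : ℝ) :
    Real.tanh (r / 2) * (1 + Real.exp (-r)) = 1 - Real.exp (-r) := by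
  have h12 : Real.exp (r / 2) * Real.exp (-r / 2) = 1 := by
    rw [← Real.exp_add, show r / 2 + -r / 2 = (0:ℝ) by ring, Real.exp_zero]
  have hpos : 0 < Real.exp (r / 2) + Real.exp (-r / 2) := by positivity
  have he : Real.exp (-r) = Real.exp (-r / 2) * Real.exp (-r / 2) := by
    rw [← Real.exp_add, show -r / 2 + -r / 2 = -r by ring]
  rw [tanh_expr, he, show -(r / 2) = -r / 2 by ring]
  field_simp
  have h12' : Real.exp (r / 2) * Real.exp (-(r / 2)) = 1 := by rw [← neg_div]; exact h12
  linear_combination (2 * Real.exp (-(r / 2))) * h12'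

lemma one_add_tanh (r : ℝ) :
    (1 + Real.tanh (r / 2)) * (1 + Real.exp (-r)) = 2 := by
  have := tanh_weight r
  have h2 : 0 < Real.exp (-r) := Real.exp_pos _
  nlinarith [this]

lemma etanh_weight {a : EReal} (ha : a ≠ ⊥) : etanh a * (1 + W a) = 1 - W a := by
  induction a using EReal.rec with
  | bot => exact absurd rfl ha
  | top => norm_num [etanh, W_top]
  | coe r => rw [etanh_coe, W_coe]; exact tanh_weight r

lemma entFn_nonneg (a : EReal) : 0 ≤ entFn a := by
  induction a using EReal.rec with
  | bot => simp [entFn]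
  | top => simp [entFn]
  | coe r =>
    simp only [entFn, EReal.coe_ne_top, EReal.coe_ne_bot, if_false]
    exact Real.logb_nonneg (by norm_num) (by nlinarith [Real.exp_pos (-(((r:EReal)).toReal))])

lemma log_one_add_etanh {a : EReal} (ha : a ≠ ⊥) :
    Real.log (1 + etanh a) = Real.log 2 * (1 - entFn a) := by
  have hlog2 : Real.log 2 ≠ 0 := ne_of_gt (Real.log_pos one_lt_two)
  induction a using EReal.rec with
  | bot => exact absurd rfl ha
  | top => norm_num [etanh, entFn]
  | coe r =>
    have h2 : 0 < Real.exp (-r) := Real.exp_pos _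
    have hden : 0 < 1 + Real.exp (-r) := by linarith
    have hone := one_add_tanh r
    have h1t : 1 + Real.tanh (r / 2) = 2 / (1 + Real.exp (-r)) := by
      field_simp at hone ⊢; linarith [hone]
    simp only [entFn, EReal.coe_ne_top, EReal.coe_ne_bot, if_false, etanh_coe, EReal.toReal_coe]
    rw [h1t, Real.log_div (by norm_num) (ne_of_gt hden), Real.logb, mul_sub, mul_one,
      mul_div_cancel₀ _ hlog2]

section Meas

set_option linter.unusedSectionVars false

variable {x : Measure EReal} [IsProbabilityMeasure x]

lemma map_neg_eq (hx : SymmetricM x) :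
    Measure.map (fun a : EReal => -a) x = x.withDensity (fun a => eexp (-a)) := by
  ext E hE
  rw [Measure.map_apply measurable_neg hE, hx E hE, withDensity_apply _ hE]

lemma meas_bot (hx : SymmetricM x) : x {⊥} = 0 := by
  have h := hx {⊤} (measurableSet_singleton _)
  have hpre : (fun a : EReal => -a) ⁻¹' {(⊤ : EReal)} = {⊥} := by
    ext a
    simp [neg_eq_iff_eq_neg]
  rw [hpre] at h
  rw [h, lintegral_singleton]
  simp [eexp]

lemma ae_ne_bot (hx : SymmetricM x) : ∀ᵐ a ∂x, a ≠ ⊥ := by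
  rw [ae_iff]
  convert meas_bot hx using 2
  ext a
  simp

lemma lsymm (hx : SymmetricM x) {f : EReal → ℝ≥0∞} (hf : Measurable f) :
    ∫⁻ a, f (-a) ∂x = ∫⁻ a, eexp (-a) * f a ∂x := by
  rw [← lintegral_map hf measurable_neg, map_neg_eq hx]
  exact lintegral_withDensity_eq_lintegral_mul x (measurable_eexp.comp measurable_neg) hf

lemma eexp_lint (hx : SymmetricM x) : ∫⁻ a, eexp (-a) ∂x = 1 := by
  have h := lsymm hx (f := fun _ => 1) measurable_const
  simp only [lintegral_const, measure_univ, mul_one, one_mul] at h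
  rw [← h]

lemma W_integrable (hx : SymmetricM x) : Integrable W x := by
  refine ⟨measurable_W.aestronglyMeasurable, ?_⟩
  rw [hasFiniteIntegral_iff_ofReal (ae_of_all _ W_nonneg)]
  calc ∫⁻ a, ENNReal.ofReal (W a) ∂x ≤ ∫⁻ a, eexp (-a) ∂x :=
        lintegral_mono fun a => ENNReal.ofReal_toReal_le
    _ = 1 := eexp_lint hx
  exact ENNReal.one_lt_top

lemma eexp_ne_top {b : EReal} (hb : b ≠ ⊤) : eexp b ≠ ⊤ := by
  unfold eexp
  split_ifs with h1 h2
  · exact absurd h1 hb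
  · exact ENNReal.zero_ne_top
  · exact ENNReal.ofReal_ne_top

lemma csymm (hx : SymmetricM x) {g : EReal → ℝ} (hg : Measurable g) (h0 : ∀ a, 0 ≤ g a) :
    ∫ a, g (-a) ∂x = ∫ a, g a * W a ∂x := by
  rw [integral_eq_lintegral_of_nonneg_ae (ae_of_all _ fun a => h0 (-a))
      (hg.comp measurable_neg).aestronglyMeasurable,
    integral_eq_lintegral_of_nonneg_ae (ae_of_all _ fun a => mul_nonneg (h0 a) (W_nonneg a))
      (hg.mul measurable_W).aestronglyMeasurable]
  congr 1
  refine (lsymm hx (f := fun a => ENNReal.ofReal (g a))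
    (ENNReal.measurable_ofReal.comp hg)).trans ?_
  refine lintegral_congr_ae ?_
  filter_upwards [ae_ne_bot hx] with a ha
  have hne : eexp (-a) ≠ ⊤ := eexp_ne_top (by simp [ha, neg_eq_iff_eq_neg])
  rw [ENNReal.ofReal_mul (h0 a), W, ENNReal.ofReal_toReal hne, mul_comm]

lemma integrable_of_bounded {g : EReal → ℝ} (hg : Measurable g) (C : ℝ)
    (hb : ∀ a, |g a| ≤ C) : Integrable g x :=
  (integrable_const C).mono' hg.aestronglyMeasurable (ae_of_all _ hb)

lemma momD (hx : SymmetricM x) (n : ℕ) :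
    ∫ a, (etanh a) ^ n * W a ∂x = ∫ a, (-etanh a) ^ n ∂x := by
  set g₁ : EReal → ℝ := fun a => max ((etanh a) ^ n) 0 with hg₁
  set g₂ : EReal → ℝ := fun a => max (-(etanh a) ^ n) 0 with hg₂
  have hm₁ : Measurable g₁ := (measurable_etanh.pow_const n).max measurable_const
  have hm₂ : Measurable g₂ := (measurable_etanh.pow_const n).neg.max measurable_const
  have hb₁ : ∀ a, |g₁ a| ≤ 1 := by
    intro a
    rw [abs_of_nonneg (le_max_right _ _)]
    exact max_le (by
      calc (etanh a)^n ≤ |(etanh a)^n| := le_abs_self _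
        _ = |etanh a|^n := (abs_pow _ _)
        _ ≤ 1^n := pow_le_pow_left₀ (abs_nonneg _) (abs_etanh_le_one a) n
        _ = 1 := one_pow n) (by norm_num)
  have hb₂ : ∀ a, |g₂ a| ≤ 1 := by
    intro a
    rw [abs_of_nonneg (le_max_right _ _)]
    exact max_le (by
      calc -(etanh a)^n ≤ |(etanh a)^n| := neg_le_abs _
        _ = |etanh a|^n := (abs_pow _ _)
        _ ≤ 1^n := pow_le_pow_left₀ (abs_nonneg _) (abs_etanh_le_one a) n
        _ = 1 := one_pow n) (by norm_num)
  have hWint₁ : Integrable (fun a => g₁ a * W a) x := by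
    refine (W_integrable hx).mono' (hm₁.mul measurable_W).aestronglyMeasurable
      (ae_of_all _ fun a => ?_)
    rw [Real.norm_eq_abs, abs_mul, abs_of_nonneg (W_nonneg a)]
    exact mul_le_of_le_one_left (W_nonneg a) (hb₁ a)
  have hWint₂ : Integrable (fun a => g₂ a * W a) x := by
    refine (W_integrable hx).mono' (hm₂.mul measurable_W).aestronglyMeasurable
      (ae_of_all _ fun a => ?_)
    rw [Real.norm_eq_abs, abs_mul, abs_of_nonneg (W_nonneg a)]
    exact mul_le_of_le_one_left (W_nonneg a) (hb₂ a)
  have hsplit : ∀ a : EReal, (etanh a) ^ n = g₁ a - g₂ a := by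
    intro a
    exact (max_zero_sub_max_neg_zero_eq_self _).symm
  have hneg₁ : ∀ a : EReal, g₁ (-a) = max ((-etanh a) ^ n) 0 := by
    intro a; rw [hg₁]; simp only [etanh_neg]
  have hneg₂ : ∀ a : EReal, g₂ (-a) = max (-(-etanh a) ^ n) 0 := by
    intro a; rw [hg₂]; simp only [etanh_neg]
  calc ∫ a, (etanh a) ^ n * W a ∂x = ∫ a, (g₁ a - g₂ a) * W a ∂x := by
        congr 1; ext a; rw [hsplit a]
    _ = ∫ a, (g₁ a * W a - g₂ a * W a) ∂x := by congr 1; ext a; ring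
    _ = ∫ a, g₁ a * W a ∂x - ∫ a, g₂ a * W a ∂x := integral_sub hWint₁ hWint₂
    _ = ∫ a, g₁ (-a) ∂x - ∫ a, g₂ (-a) ∂x := by
        rw [csymm hx hm₁ fun a => le_max_right _ _, csymm hx hm₂ fun a => le_max_right _ _]
    _ = ∫ a, max ((-etanh a) ^ n) 0 ∂x - ∫ a, max (-(-etanh a) ^ n) 0 ∂x := by
        simp_rw [hneg₁, hneg₂]
    _ = ∫ a, (max ((-etanh a) ^ n) 0 - max (-(-etanh a) ^ n) 0) ∂x := by
        rw [integral_sub]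
        · exact integrable_of_bounded ((measurable_etanh.neg.pow_const n).max measurable_const) 1
            (by intro a; rw [abs_of_nonneg (le_max_right _ _)]
                exact max_le (by
                  calc (-etanh a)^n ≤ |(-etanh a)^n| := le_abs_self _
                    _ = |etanh a|^n := by rw [abs_pow, abs_neg]
                    _ ≤ 1 := by
                        calc |etanh a|^n ≤ 1^n := pow_le_pow_left₀ (abs_nonneg _) (abs_etanh_le_one a) n
                          _ = 1 := one_pow n) (by norm_num))
        · exact integrable_of_bounded ((measurable_etanh.neg.pow_const n).neg.max measurable_const) 1
            (by intro a; rw [abs_of_nonneg (le_max_right _ _)]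
                exact max_le (by
                  calc -(-etanh a)^n ≤ |(-etanh a)^n| := neg_le_abs _
                    _ = |etanh a|^n := by rw [abs_pow, abs_neg]
                    _ ≤ 1 := by
                        calc |etanh a|^n ≤ 1^n := pow_le_pow_left₀ (abs_nonneg _) (abs_etanh_le_one a) n
                          _ = 1 := one_pow n) (by norm_num))
    _ = ∫ a, (-etanh a) ^ n ∂x := by
        congr 1; ext a
        exact max_zero_sub_max_neg_zero_eq_self _

end Meas
/-! ### Series lemmas -/

def gk (t : ℝ) (k : ℕ) : ℝ := t ^ (2*k+1) / (2*(k:ℝ)+1) - t ^ (2*k+2) / (2*(k:ℝ)+2)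

lemma gk_one (k : ℕ) : gk 1 k = 1/(2*(k:ℝ)+1) - 1/(2*(k:ℝ)+2) := by simp [gk]

lemma gk_nonneg {t : ℝ} (h0 : 0 ≤ t) (h1 : t ≤ 1) (k : ℕ) : 0 ≤ gk t k := by
  have hp : t ^ (2*k+2) ≤ t ^ (2*k+1) := pow_le_pow_of_le_one h0 h1 (by omega)
  have h : t ^ (2*k+2) / (2*(k:ℝ)+2) ≤ t ^ (2*k+1) / (2*(k:ℝ)+1) :=
    div_le_div₀ (pow_nonneg h0 _) hp (by positivity) (by linarith)
  simp only [gk]; linarith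

lemma gk_nonpos {t : ℝ} (hm : -1 ≤ t) (h0 : t ≤ 0) (k : ℕ) : gk t k ≤ 0 := by
  have h1 : t ^ (2*k+1) ≤ 0 := Odd.pow_nonpos ⟨k, by ring⟩ h0
  have h2 : 0 ≤ t ^ (2*k+2) := Even.pow_nonneg ⟨k+1, by ring⟩ t
  have d1 : t ^ (2*k+1) / (2*(k:ℝ)+1) ≤ 0 := div_nonpos_iff.mpr (Or.inr ⟨h1, by positivity⟩)
  have d2 : 0 ≤ t ^ (2*k+2) / (2*(k:ℝ)+2) := div_nonneg h2 (by positivity)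
  simp only [gk]; linarith

lemma sum_gk_one (K : ℕ) :
    ∑ k ∈ Finset.range K, gk 1 k = ((harmonic (2*K) : ℚ) : ℝ) - ((harmonic K : ℚ) : ℝ) := by
  induction K with
  | zero => simp [harmonic]
  | succ K ih =>
    have hq : (harmonic (2*(K+1)) : ℚ) =
        harmonic (2*K) + ((2*K+1 : ℕ) : ℚ)⁻¹ + ((2*K+2 : ℕ) : ℚ)⁻¹ := by
      rw [show 2*(K+1) = (2*K+1)+1 by ring, harmonic_succ, harmonic_succ]
    rw [Finset.sum_range_succ, ih, gk_one, hq, harmonic_succ]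
    push_cast
    have c1 : (2*(K:ℝ)+1) ≠ 0 := by positivity
    have c2 : (2*(K:ℝ)+2) ≠ 0 := by positivity
    have c3 : ((K:ℝ)+1) ≠ 0 := by positivity
    field_simp
    ring

lemma AH : HasSum (gk 1) (Real.log 2) := by
  rw [hasSum_iff_tendsto_nat_of_nonneg (fun k => gk_nonneg zero_le_one le_rfl k)]
  have h2K : Tendsto (fun K : ℕ => 2*K) atTop atTop :=
    tendsto_atTop_mono (fun n => by simp only [id_eq]; omega) tendsto_id
  have h2 := tendsto_harmonic_sub_log.comp h2K
  have h3 := tendsto_harmonic_sub_log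
  have h4 := (h2.sub h3).add (tendsto_const_nhds (x := Real.log 2))
  rw [sub_self, zero_add] at h4
  refine h4.congr' ?_
  filter_upwards [eventually_ge_atTop 1] with K hK
  have hK0 : (K:ℝ) ≠ 0 := Nat.cast_ne_zero.mpr (by omega)
  have hlog : Real.log ((2*K : ℕ) : ℝ) = Real.log 2 + Real.log K := by
    push_cast
    rw [Real.log_mul (by norm_num) hK0]
  simp only [Function.comp]
  rw [sum_gk_one, hlog]
  ring

lemma gk_hasSum {t : ℝ} (h : |t| < 1) : HasSum (gk t) (Real.log (1+t)) := by
  have A := (hasSum_pow_div_log_of_abs_lt_one (x := -t) (by rwa [abs_neg])).neg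
  rw [sub_neg_eq_add, neg_neg] at A
  set a : ℕ → ℝ := fun n => -((-t) ^ (n+1) / ((n:ℝ)+1)) with ha
  have hsumm : Summable a := A.summable
  have he : Summable (fun k => a (2*k)) :=
    hsumm.comp_injective (fun p q h => by omega)
  have ho : Summable (fun k => a (2*k+1)) :=
    hsumm.comp_injective (fun p q h => by omega)
  have hc : HasSum a ((∑' k, a (2*k)) + ∑' k, a (2*k+1)) :=
    he.hasSum.even_add_odd ho.hasSum
  have huniq : (∑' k, a (2*k)) + (∑' k, a (2*k+1)) = Real.log (1+t) := hc.unique A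
  have final := he.hasSum.add ho.hasSum
  rw [huniq] at final
  have hfun : (fun k => a (2*k) + a (2*k+1)) = gk t := by
    funext k
    have hodd : (-t) ^ (2*k+1) = -t ^ (2*k+1) := Odd.neg_pow ⟨k, by ring⟩ t
    have heven : (-t) ^ (2*k+2) = t ^ (2*k+2) := Even.neg_pow ⟨k+1, by ring⟩ t
    simp only [ha, gk]
    rw [show 2*k+1+1 = 2*k+2 by ring, hodd, heven]
    push_cast
    ring
  rwa [hfun] at final

lemma gk_hasSum' {t : ℝ} (hm : -1 < t) (h1 : t ≤ 1) : HasSum (gk t) (Real.log (1+t)) := by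
  rcases eq_or_lt_of_le h1 with rfl | hlt
  · rw [show (1:ℝ)+1 = 2 by norm_num]
    exact AH
  · exact gk_hasSum (abs_lt.mpr ⟨hm, hlt⟩)

lemma gk_partial_bound {t : ℝ} (hm : -1 < t) (h1 : t ≤ 1) (K : ℕ) :
    |∑ k ∈ Finset.range K, gk t k| ≤ |Real.log (1+t)| := by
  have hs := gk_hasSum' hm h1
  rcases le_or_gt 0 t with ht | ht
  · have h0 : 0 ≤ ∑ k ∈ Finset.range K, gk t k :=
      Finset.sum_nonneg fun k _ => gk_nonneg ht h1 k
    have hub : ∑ k ∈ Finset.range K, gk t k ≤ Real.log (1+t) := by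
      have := Summable.sum_le_tsum (Finset.range K) (fun k _ => gk_nonneg ht h1 k) hs.summable
      rwa [hs.tsum_eq] at this
    rw [abs_of_nonneg h0, abs_of_nonneg (Real.log_nonneg (by linarith))]
    exact hub
  · have hle0 : ∑ k ∈ Finset.range K, gk t k ≤ 0 :=
      Finset.sum_nonpos fun k _ => gk_nonpos hm.le ht.le k
    have htail : ∑' i, gk t (i + K) ≤ 0 :=
      tsum_nonpos fun i => gk_nonpos hm.le ht.le _
    have hsplit := Summable.sum_add_tsum_nat_add (f := gk t) K hs.summable
    rw [hs.tsum_eq] at hsplit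
    have hlb : Real.log (1+t) ≤ ∑ k ∈ Finset.range K, gk t k := by linarith
    rw [abs_of_nonpos hle0, abs_of_nonpos (Real.log_nonpos (by linarith) (by linarith))]
    linarith
/-! ### Integrability of `entFn` -/

lemma entFn_le (a : EReal) : entFn a ≤ 1 + max 0 (-a.toReal) / Real.log 2 := by
  have hlog2 : (0:ℝ) < Real.log 2 := Real.log_pos one_lt_two
  induction a using EReal.rec with
  | bot => simp [entFn]
  | top => simp [entFn]
  | coe r =>
    simp only [entFn, EReal.coe_ne_top, EReal.coe_ne_bot, if_false, EReal.toReal_coe]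
    have hkey : 1 + Real.exp (-r) ≤ 2 * Real.exp (max 0 (-r)) := by
      rcases le_or_gt 0 r with hr | hr
      · rw [max_eq_left (by linarith)]
        have : Real.exp (-r) ≤ 1 := by
          rw [show (1:ℝ) = Real.exp 0 by rw [Real.exp_zero]]
          exact Real.exp_le_exp.mpr (by linarith)
        rw [Real.exp_zero]
        linarith
      · rw [max_eq_right (by linarith)]
        have : (1:ℝ) ≤ Real.exp (-r) := Real.one_le_exp (by linarith)
        linarith
    calc Real.logb 2 (1 + Real.exp (-r)) ≤ Real.logb 2 (2 * Real.exp (max 0 (-r))) :=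
          Real.logb_le_logb_of_le one_lt_two (by positivity) hkey
      _ = 1 + max 0 (-r) / Real.log 2 := by
          rw [Real.logb, Real.log_mul two_ne_zero (Real.exp_ne_zero _), Real.log_exp, add_div,
            div_self (ne_of_gt hlog2)]

lemma m_pt_bound (a : EReal) : eexp (-a) * ENNReal.ofReal (max 0 a.toReal) ≤ 1 := by
  induction a using EReal.rec with
  | bot => simp [eexp]
  | top => simp [eexp]
  | coe r =>
    rw [show -((r:ℝ) : EReal) = ((-r : ℝ) : EReal) by push_cast; ring, eexp_coe,
      EReal.toReal_coe, ← ENNReal.ofReal_mul (Real.exp_pos _).le]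
    rw [show (1 : ℝ≥0∞) = ENNReal.ofReal 1 by simp]
    apply ENNReal.ofReal_le_ofReal
    rcases le_or_gt r 0 with hr | hr
    · rw [max_eq_left (by linarith)]
      simp
    · rw [max_eq_right (by linarith), Real.exp_neg, inv_mul_le_iff₀ (Real.exp_pos r), mul_one]
      linarith [Real.add_one_le_exp r]

section Meas2
set_option linter.unusedSectionVars false
variable {x : Measure EReal} [IsProbabilityMeasure x]

lemma m_integrable (hx : SymmetricM x) :
    Integrable (fun a : EReal => max 0 (-a.toReal)) x := by
  refine ⟨(measurable_const.max measurable_ereal_toReal.neg).aestronglyMeasurable, ?_⟩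
  show (∫⁻ a, ‖max 0 (-a.toReal)‖₊ ∂x) < ⊤
  have hnn : ∀ a : EReal, (‖max 0 (-a.toReal)‖₊ : ℝ≥0∞) = ENNReal.ofReal (max 0 (-a.toReal)) :=
    fun a => by
      rw [← ENNReal.ofReal_coe_nnreal, coe_nnnorm, Real.norm_eq_abs, abs_of_nonneg (le_max_left _ _)]
  simp_rw [hnn]
  refine lt_of_le_of_lt ?_ ENNReal.one_lt_top
  have hrw : (fun a : EReal => ENNReal.ofReal (max 0 (-a.toReal)))
      = fun a : EReal => (fun b : EReal => ENNReal.ofReal (max 0 b.toReal)) (-a) := by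
    funext a
    simp [EReal.toReal_neg]
  calc ∫⁻ a, ENNReal.ofReal (max 0 (-a.toReal)) ∂x
      = ∫⁻ a, (fun b : EReal => ENNReal.ofReal (max 0 b.toReal)) (-a) ∂x := by rw [← hrw]
    _ = ∫⁻ a, eexp (-a) * ENNReal.ofReal (max 0 a.toReal) ∂x :=
        lsymm hx (ENNReal.measurable_ofReal.comp (measurable_const.max measurable_ereal_toReal))
    _ ≤ ∫⁻ _, 1 ∂x := lintegral_mono m_pt_bound
    _ = 1 := by simp

lemma entFn_integrable (hx : SymmetricM x) : Integrable entFn x := by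
  have hint : Integrable (fun a : EReal => 1 + max 0 (-a.toReal) / Real.log 2) x :=
    (integrable_const 1).add ((m_integrable hx).div_const _)
  refine hint.mono' measurable_entFn.aestronglyMeasurable (ae_of_all _ fun a => ?_)
  rw [Real.norm_eq_abs, abs_of_nonneg (entFn_nonneg a)]
  exact entFn_le a

/-! ### Moments -/

lemma pow_integrable (n : ℕ) : Integrable (fun a => (etanh a) ^ n) x := by
  refine integrable_of_bounded (measurable_etanh.pow_const n) 1 fun a => ?_
  rw [abs_pow]
  calc |etanh a| ^ n ≤ 1 ^ n := pow_le_pow_left₀ (abs_nonneg _) (abs_etanh_le_one a) n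
    _ = 1 := one_pow n

lemma powW_integrable (hx : SymmetricM x) (n : ℕ) :
    Integrable (fun a => (etanh a) ^ n * W a) x := by
  refine (W_integrable hx).mono'
    ((measurable_etanh.pow_const n).mul measurable_W).aestronglyMeasurable
    (ae_of_all _ fun a => ?_)
  rw [Real.norm_eq_abs, abs_mul, abs_of_nonneg (W_nonneg a), abs_pow]
  refine mul_le_of_le_one_left (W_nonneg a) ?_
  calc |etanh a| ^ n ≤ 1 ^ n := pow_le_pow_left₀ (abs_nonneg _) (abs_etanh_le_one a) n
    _ = 1 := one_pow n

lemma momM (hx : SymmetricM x) (k : ℕ) :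
    ∫ a, (etanh a) ^ (2*k+1) ∂x = ∫ a, (etanh a) ^ (2*k+2) ∂x := by
  have h1 := momD hx (2*k+1)
  have h2 := momD hx (2*k+2)
  rw [show (fun a => (-etanh a) ^ (2*k+1)) = fun a => -((etanh a) ^ (2*k+1)) from
      funext fun a => Odd.neg_pow ⟨k, by ring⟩ _, integral_neg] at h1
  rw [show (fun a => (-etanh a) ^ (2*k+2)) = fun a => (etanh a) ^ (2*k+2) from
      funext fun a => Even.neg_pow ⟨k+1, by ring⟩ _] at h2
  have hpt : ∀ᵐ a ∂x, (etanh a) ^ (2*k+1) * (1 - W a)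
      = (etanh a) ^ (2*k+2) * (1 + W a) := by
    filter_upwards [ae_ne_bot hx] with a ha
    have hw := etanh_weight ha
    have hpow : (etanh a) ^ (2*k+2) = (etanh a) ^ (2*k+1) * etanh a := by
      rw [show 2*k+2 = (2*k+1)+1 by ring, pow_succ]
    rw [hpow]
    linear_combination (-(etanh a)^(2*k+1)) * hw
  have hL : Integrable (fun a => (etanh a) ^ (2*k+1) * (1 - W a)) x := by
    have : (fun a => (etanh a) ^ (2*k+1) * (1 - W a))
        = fun a => (etanh a) ^ (2*k+1) - (etanh a) ^ (2*k+1) * W a := by funext a; ring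
    rw [this]
    exact (pow_integrable _).sub (powW_integrable hx _)
  have hR : Integrable (fun a => (etanh a) ^ (2*k+2) * (1 + W a)) x := by
    have : (fun a => (etanh a) ^ (2*k+2) * (1 + W a))
        = fun a => (etanh a) ^ (2*k+2) + (etanh a) ^ (2*k+2) * W a := by funext a; ring
    rw [this]
    exact (pow_integrable _).add (powW_integrable hx _)
  have heq := integral_congr_ae hpt
  have e1 : ∫ a, (etanh a) ^ (2*k+1) * (1 - W a) ∂x
      = ∫ a, (etanh a) ^ (2*k+1) ∂x - ∫ a, (etanh a) ^ (2*k+1) * W a ∂x := by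
    rw [show (fun a => (etanh a) ^ (2*k+1) * (1 - W a))
        = fun a => (etanh a) ^ (2*k+1) - (etanh a) ^ (2*k+1) * W a from funext fun a => by ring]
    exact integral_sub (pow_integrable _) (powW_integrable hx _)
  have e2 : ∫ a, (etanh a) ^ (2*k+2) * (1 + W a) ∂x
      = ∫ a, (etanh a) ^ (2*k+2) ∂x + ∫ a, (etanh a) ^ (2*k+2) * W a ∂x := by
    rw [show (fun a => (etanh a) ^ (2*k+2) * (1 + W a))
        = fun a => (etanh a) ^ (2*k+2) + (etanh a) ^ (2*k+2) * W a from funext fun a => by ring]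
    exact integral_add (pow_integrable _) (powW_integrable hx _)
  rw [e1, e2, h1, h2] at heq
  linarith

lemma gk_integrable (k : ℕ) : Integrable (fun a => gk (etanh a) k) x := by
  have : (fun a => gk (etanh a) k)
      = fun a => (etanh a) ^ (2*k+1) / (2*(k:ℝ)+1) - (etanh a) ^ (2*k+2) / (2*(k:ℝ)+2) := rfl
  rw [this]
  exact ((pow_integrable _).div_const _).sub ((pow_integrable _).div_const _)

lemma momGk (hx : SymmetricM x) (k : ℕ) :
    ∫ a, gk (etanh a) k ∂x = Real.log 2 * (gam (k+1) * Mk (k+1) x) := by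
  have hlog2 : (0:ℝ) < Real.log 2 := Real.log_pos one_lt_two
  have hM : Mk (k+1) x = ∫ a, (etanh a) ^ (2*k+2) ∂x := by
    rw [Mk, show 2*(k+1) = 2*k+2 by ring]
  have hsub : ∫ a, gk (etanh a) k ∂x
      = (∫ a, (etanh a) ^ (2*k+1) ∂x) / (2*(k:ℝ)+1)
        - (∫ a, (etanh a) ^ (2*k+2) ∂x) / (2*(k:ℝ)+2) := by
    rw [show (fun a => gk (etanh a) k)
        = fun a => (etanh a) ^ (2*k+1) / (2*(k:ℝ)+1) - (etanh a) ^ (2*k+2) / (2*(k:ℝ)+2) from rfl]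
    rw [integral_sub ((pow_integrable _).div_const _) ((pow_integrable _).div_const _),
      integral_div, integral_div]
  set M := Mk (k+1) x with hMdef
  have c1 : (2*(k:ℝ)+1) ≠ 0 := by positivity
  have c2 : (2*(k:ℝ)+2) ≠ 0 := by positivity
  have hk0 : (0:ℝ) ≤ (k:ℝ) := Nat.cast_nonneg k
  have d1 : (2 * (((k+1 : ℕ)):ℝ)) ≠ 0 := by positivity
  have d2 : (2 * (((k+1 : ℕ)):ℝ) - 1) ≠ 0 := by push_cast; nlinarith
  have key : M/(2*(k:ℝ)+1) - M/(2*(k:ℝ)+2)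
      = Real.log 2 * (1/(Real.log 2 * (2 * (((k+1 : ℕ)):ℝ)) * (2 * (((k+1 : ℕ)):ℝ) - 1)) * M) := by
    push_cast at d1 d2 ⊢
    field_simp
    ring
  rw [hsub, momM hx k, ← hM, gam]
  exact key
end Meas2
end S5

open S5

/-- Series expansion of the entropy functional:
`H(x) = 1 − Σ_{k=1}^∞ γ_k M_k(x)` for every symmetric probability measure `x`. -/
theorem stmt5 (x : Measure EReal) [IsProbabilityMeasure x] (hx : SymmetricM x) :
    Hent x = 1 - ∑' k : ℕ, gam (k + 1) * Mk (k + 1) x := by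
  have hlog2 : (0:ℝ) < Real.log 2 := Real.log_pos one_lt_two
  set F : ℕ → EReal → ℝ := fun K a => ∑ k ∈ Finset.range K, (1/Real.log 2) * gk (etanh a) k
    with hF
  have hFmeas : ∀ K : ℕ, AEStronglyMeasurable (F K) x := by
    intro K
    refine (Finset.measurable_sum (Finset.range K) fun k _ => ?_).aestronglyMeasurable
    exact (((measurable_etanh.pow_const _).div_const _).sub
      ((measurable_etanh.pow_const _).div_const _)).const_mul _
  have hDint : Integrable (fun a => 1 + entFn a) x :=
    (integrable_const 1).add (entFn_integrable hx)
  have hb : ∀ K : ℕ, ∀ᵐ a ∂x, ‖F K a‖ ≤ 1 + entFn a := by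
    intro K
    filter_upwards [ae_ne_bot hx] with a ha
    have h1 : F K a = (1/Real.log 2) * ∑ k ∈ Finset.range K, gk (etanh a) k := by
      rw [hF, Finset.mul_sum]
    rw [Real.norm_eq_abs, h1, abs_mul,
      abs_of_pos (show (0:ℝ) < 1/Real.log 2 by positivity)]
    have h2 := gk_partial_bound (neg_one_lt_etanh ha) (etanh_le_one a) K
    have h3 : |Real.log (1 + etanh a)| = Real.log 2 * |1 - entFn a| := by
      rw [log_one_add_etanh ha, abs_mul, abs_of_pos hlog2]
    have h4 : |1 - entFn a| ≤ 1 + entFn a := by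
      have := entFn_nonneg a
      rcases abs_cases (1 - entFn a) with ⟨h,_⟩|⟨h,_⟩ <;> linarith
    calc (1/Real.log 2) * |∑ k ∈ Finset.range K, gk (etanh a) k|
        ≤ (1/Real.log 2) * (Real.log 2 * |1 - entFn a|) := by
          rw [← h3]; exact mul_le_mul_of_nonneg_left h2 (by positivity)
      _ = |1 - entFn a| := by
          rw [← mul_assoc, one_div, inv_mul_cancel₀ hlog2.ne', one_mul]
      _ ≤ 1 + entFn a := h4
  have hlim : ∀ᵐ a ∂x, Tendsto (fun K => F K a) atTop (𝓝 (1 - entFn a)) := by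
    filter_upwards [ae_ne_bot hx] with a ha
    have hs := (gk_hasSum' (neg_one_lt_etanh ha) (etanh_le_one a)).mul_left (1/Real.log 2)
    have hsum : (1/Real.log 2) * Real.log (1 + etanh a) = 1 - entFn a := by
      rw [log_one_add_etanh ha, ← mul_assoc, one_div, inv_mul_cancel₀ hlog2.ne', one_mul]
    rw [hsum] at hs
    exact hs.tendsto_sum_nat
  have hDC := tendsto_integral_of_dominated_convergence _ hFmeas hDint hb hlim
  have hFK : ∀ K : ℕ, ∫ a, F K a ∂x = ∑ k ∈ Finset.range K, gam (k+1) * Mk (k+1) x := by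
    intro K
    rw [hF]
    rw [integral_finset_sum _ fun k _ => (gk_integrable k).const_mul _]
    refine Finset.sum_congr rfl fun k _ => ?_
    rw [MeasureTheory.integral_const_mul, momGk hx k, ← mul_assoc, one_div, inv_mul_cancel₀ hlog2.ne',
      one_mul]
  have hMb : ∀ k : ℕ, |Mk (k+1) x| ≤ 1 := by
    intro k
    have hn := norm_integral_le_of_norm_le_const (μ := x)
      (f := fun a => (etanh a)^(2*(k+1))) (C := 1) (ae_of_all _ fun a => by
        rw [Real.norm_eq_abs, abs_pow]
        calc |etanh a|^(2*(k+1)) ≤ 1^(2*(k+1)) :=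
              pow_le_pow_left₀ (abs_nonneg _) (abs_etanh_le_one a) _
          _ = 1 := one_pow _)
    rw [Mk]
    simpa [Real.norm_eq_abs, measure_univ] using hn
  have hgampos : ∀ k : ℕ, 0 < gam (k+1) := by
    intro k
    rw [gam]
    have hpos : (0:ℝ) < 2*(((k+1:ℕ)):ℝ) - 1 := by
      push_cast
      nlinarith [Nat.cast_nonneg (α := ℝ) k]
    have h2p : (0:ℝ) < 2*(((k+1:ℕ)):ℝ) := by positivity
    exact one_div_pos.mpr (mul_pos (mul_pos hlog2 h2p) hpos)
  have hgam_le : ∀ k : ℕ, gam (k+1) ≤ (1/Real.log 2) * (1/((k:ℝ)+1)^2) := by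
    intro k
    rw [gam, one_div_mul_one_div]
    have hk0 : (0:ℝ) ≤ (k:ℝ) := Nat.cast_nonneg k
    have hden : (0:ℝ) < Real.log 2 * ((k:ℝ)+1)^2 := by positivity
    refine one_div_le_one_div_of_le hden ?_
    have hfac : ((k:ℝ)+1)^2 ≤ (2*(((k+1:ℕ)):ℝ)) * (2*(((k+1:ℕ)):ℝ) - 1) := by
      push_cast
      nlinarith
    calc Real.log 2 * ((k:ℝ)+1)^2
        ≤ Real.log 2 * ((2*(((k+1:ℕ)):ℝ)) * (2*(((k+1:ℕ)):ℝ) - 1)) :=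
          mul_le_mul_of_nonneg_left hfac hlog2.le
      _ = Real.log 2 * (2*(((k+1:ℕ)):ℝ)) * (2*(((k+1:ℕ)):ℝ) - 1) := by ring
  have hgsum : Summable (fun k : ℕ => (1/Real.log 2) * (1/((k:ℝ)+1)^2)) := by
    have hp : Summable (fun n : ℕ => 1/((n:ℝ))^2) := summable_one_div_nat_pow.mpr one_lt_two
    have h1 := (summable_nat_add_iff 1).mpr hp
    exact (h1.congr (fun n => by push_cast; ring)).mul_left _
  have hsummable : Summable (fun k : ℕ => gam (k+1) * Mk (k+1) x) := by
    refine Summable.of_norm_bounded hgsum fun k => ?_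
    rw [Real.norm_eq_abs, abs_mul, abs_of_pos (hgampos k)]
    calc gam (k+1) * |Mk (k+1) x| ≤ gam (k+1) * 1 :=
          mul_le_mul_of_nonneg_left (hMb k) (hgampos k).le
      _ = gam (k+1) := mul_one _
      _ ≤ _ := hgam_le k
  have hts := hsummable.hasSum.tendsto_sum_nat
  have hDC' : Tendsto (fun K => ∑ k ∈ Finset.range K, gam (k+1) * Mk (k+1) x) atTop
      (𝓝 (∫ a, (1 - entFn a) ∂x)) := hDC.congr fun K => hFK K
  have huniq : ∫ a, (1 - entFn a) ∂x = ∑' k : ℕ, gam (k+1) * Mk (k+1) x :=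
    tendsto_nhds_unique hDC' hts
  have hint : ∫ a, (1 - entFn a) ∂x = 1 - Hent x := by
    rw [integral_sub (integrable_const 1) (entFn_integrable hx)]
    simp [Hent]
  linarith [huniq, hint]
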